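/- Let H be a real Hilbert space continuously embedded in a normed space L with ‖u‖_L ≤ C_S^{1/2}‖u‖_H for all u (Sobolev inequality), and let E(u) = (1/2)‖u‖_H² - (1/p)‖u‖_L^p with p > 2. If u_n is a Palais–Smale sequence for E at level c < ((p-2)/(2p)) C_S^{-p/(p-2)}, then u_n → 0 strongly in H. -/

import Mathlib

/-!
Testing the derivative against `u` itself gives the Euler identity
`E'(u) u = ‖u‖² - ‖ι u‖ᵖ`, so along a Palais–Smale sequence `‖uₙ‖² - ‖ι uₙ‖ᵖ = o(1 + ‖uₙ‖²)`,
while `E(uₙ) = (p-2)/(2p) ‖uₙ‖² + (‖uₙ‖² - ‖ι uₙ‖ᵖ)/p`. Hence `‖uₙ‖²` is bounded, and both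
`‖uₙ‖²` and `‖ι uₙ‖ᵖ` converge to `a = 2pc/(p-2)`. The Sobolev inequality in the limit gives
`a ≤ C_S^{p/2} a^{p/2}`, which for `a > 0` means `a ≥ C_S^{-p/(p-2)}`, contradicting the bound
on `c`; so `a = 0`.
-/

open Filter Topology

theorem eventually_le_of_mul_sub_le {x e δ : ℕ → ℝ} {θ c : ℝ} (hθ : 0 < θ)
    (hx : ∀ n, 0 ≤ x n) (he : Tendsto e atTop (𝓝 c)) (hδ : Tendsto δ atTop (𝓝 0))
    (h : ∀ n, θ * x n - e n ≤ δ n * (1 + x n)) :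
    ∀ᶠ n in atTop, x n ≤ (2 * (c + 1) + θ) / θ := by
  have he_le : ∀ᶠ n in atTop, e n ≤ c + 1 := he.eventually (eventually_le_nhds (by linarith))
  have hδ_le : ∀ᶠ n in atTop, δ n ≤ θ / 2 := hδ.eventually (eventually_le_nhds (by linarith))
  filter_upwards [he_le, hδ_le] with n hen hδn
  have hδx : δ n * (1 + x n) ≤ θ / 2 * (1 + x n) :=
    mul_le_mul_of_nonneg_right hδn (by linarith [hx n])
  rw [le_div_iff₀ hθ]
  nlinarith [h n]

theorem tendsto_mul_sub_of_abs_le {x e δ : ℕ → ℝ} {θ c : ℝ} (hθ : 0 < θ)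
    (hx : ∀ n, 0 ≤ x n) (he : Tendsto e atTop (𝓝 c)) (hδ : Tendsto δ atTop (𝓝 0))
    (h : ∀ n, |θ * x n - e n| ≤ δ n * (1 + x n)) :
    Tendsto (fun n => θ * x n - e n) atTop (𝓝 0) := by
  set K := (2 * (c + 1) + θ) / θ
  have hbdd := eventually_le_of_mul_sub_le hθ hx he hδ fun n => (le_abs_self _).trans (h n)
  refine squeeze_zero_norm' (a := fun n => |δ n| * (1 + K)) ?_ ?_
  · filter_upwards [hbdd] with n hn
    calc ‖θ * x n - e n‖ ≤ δ n * (1 + x n) := h n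
      _ ≤ |δ n| * (1 + x n) := mul_le_mul_of_nonneg_right (le_abs_self _) (by linarith [hx n])
      _ ≤ |δ n| * (1 + K) := by gcongr
  · simpa using hδ.abs.mul_const (1 + K)

theorem rpow_le_mul_rpow_sq {x y C p : ℝ} (hx : 0 ≤ x) (hy : 0 ≤ y) (hC : 0 ≤ C) (hp : 0 ≤ p)
    (h : x ≤ C ^ ((1 : ℝ) / 2) * y) : x ^ p ≤ C ^ (p / 2) * (y ^ 2) ^ (p / 2) := by
  calc x ^ p ≤ (C ^ ((1 : ℝ) / 2) * y) ^ p := Real.rpow_le_rpow hx h hp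
    _ = C ^ (p / 2) * (y ^ 2) ^ (p / 2) := by
      rw [Real.mul_rpow (by positivity) hy, ← Real.rpow_mul hC, ← Real.rpow_natCast y 2,
        ← Real.rpow_mul hy]
      ring_nf

theorem rpow_neg_le_of_le_mul_rpow {a C p : ℝ} (hp : 2 < p) (hC : 0 < C) (ha : 0 < a)
    (h : a ≤ C ^ (p / 2) * a ^ (p / 2)) : C ^ (-(p / (p - 2))) ≤ a := by
  have hq : 0 < (p - 2) / 2 := by linarith
  have hpow : C ^ (-(p / 2)) ≤ a ^ ((p - 2) / 2) := by
    rw [Real.rpow_neg hC.le, inv_le_iff_one_le_mul₀' (by positivity)]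
    have hsplit : a ^ (p / 2) = a ^ ((p - 2) / 2) * a := by
      rw [← Real.rpow_add_one ha.ne']
      ring_nf
    refine le_of_mul_le_mul_right ?_ ha
    rwa [one_mul, mul_assoc, ← hsplit]
  calc C ^ (-(p / (p - 2))) = (C ^ (-(p / 2))) ^ ((p - 2) / 2)⁻¹ := by
        rw [← Real.rpow_mul hC.le]
        congr 1
        field_simp
    _ ≤ (a ^ ((p - 2) / 2)) ^ ((p - 2) / 2)⁻¹ := by gcongr
    _ = a := Real.rpow_rpow_inv ha.le hq.ne'

namespace SobolevFunctional

variable {H L : Type*} [NormedAddCommGroup H] [InnerProductSpace ℝ H]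
  [NormedAddCommGroup L] [NormedSpace ℝ L]

noncomputable section

def energy (ι : H →L[ℝ] L) (p : ℝ) (u : H) : ℝ := (1 / 2) * ‖u‖ ^ 2 - (1 / p) * ‖ι u‖ ^ p

def nehari (ι : H →L[ℝ] L) (p : ℝ) (u : H) : ℝ := ‖u‖ ^ 2 - ‖ι u‖ ^ p

end

variable (ι : H →L[ℝ] L) {p : ℝ}

theorem energy_eq_mul_norm_sq_add_nehari (hp : p ≠ 0) (u : H) :
    energy ι p u = (p - 2) / (2 * p) * ‖u‖ ^ 2 + nehari ι p u / p := by
  simp only [energy, nehari]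
  field_simp
  ring

theorem energy_smul {t : ℝ} (ht : 0 ≤ t) (v : H) :
    energy ι p (t • v) = (1 / 2) * t ^ 2 * ‖v‖ ^ 2 - (1 / p) * t ^ p * ‖ι v‖ ^ p := by
  simp only [energy, map_smul, norm_smul, Real.norm_of_nonneg ht,
    Real.mul_rpow ht (norm_nonneg _), mul_pow]
  ring

theorem hasDerivAt_energy_smul (hp : p ≠ 0) (v : H) :
    HasDerivAt (fun t : ℝ => energy ι p (t • v)) (nehari ι p v) 1 := by
  have hquad : HasDerivAt (fun t : ℝ => (1 / 2) * t ^ 2 * ‖v‖ ^ 2) (‖v‖ ^ 2) 1 :=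
    (((hasDerivAt_pow 2 (1 : ℝ)).const_mul (1 / 2)).mul_const (‖v‖ ^ 2)).congr_deriv
      (by norm_num)
  have hpow : HasDerivAt (fun t : ℝ => (1 / p) * t ^ p * ‖ι v‖ ^ p) (‖ι v‖ ^ p) 1 := by
    simpa [hp] using
      ((Real.hasDerivAt_rpow_const (p := p) (Or.inl one_ne_zero)).const_mul (1 / p)).mul_const
        (‖ι v‖ ^ p)
  refine (hquad.sub hpow).congr_of_eventuallyEq ?_
  filter_upwards [eventually_gt_nhds one_pos] with t ht
  exact energy_smul ι ht.le v

theorem apply_self_eq_nehari_of_hasFDerivAt (hp : p ≠ 0) {D : H →L[ℝ] ℝ} {v : H}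
    (hD : HasFDerivAt (energy ι p) D v) : D v = nehari ι p v := by
  have hray : HasDerivAt (fun t : ℝ => t • v) v 1 := by
    simpa using (hasDerivAt_id (1 : ℝ)).smul_const v
  have hD' : HasFDerivAt (energy ι p) D ((1 : ℝ) • v) := by rwa [one_smul]
  have hcomp := hD'.comp_hasDerivAt 1 hray
  exact hcomp.unique (hasDerivAt_energy_smul ι hp v)

theorem abs_nehari_le_of_hasFDerivAt (hp : p ≠ 0) {D : H →L[ℝ] ℝ} {v : H}
    (hD : HasFDerivAt (energy ι p) D v) : |nehari ι p v| ≤ ‖D‖ * (1 + ‖v‖ ^ 2) := by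
  rw [← apply_self_eq_nehari_of_hasFDerivAt ι hp hD, ← Real.norm_eq_abs]
  refine (D.le_opNorm v).trans (mul_le_mul_of_nonneg_left ?_ (norm_nonneg D))
  nlinarith [sq_nonneg (‖v‖ - 1), norm_nonneg v]

theorem tendsto_mul_norm_sq_sub_energy (hp : 2 < p) {D : ℕ → H →L[ℝ] ℝ} {u : ℕ → H} {c : ℝ}
    (hD : ∀ n, HasFDerivAt (energy ι p) (D n) (u n))
    (hE : Tendsto (fun n => energy ι p (u n)) atTop (𝓝 c))
    (hD0 : Tendsto (fun n => ‖D n‖) atTop (𝓝 0)) :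
    Tendsto (fun n => (p - 2) / (2 * p) * ‖u n‖ ^ 2 - energy ι p (u n)) atTop (𝓝 0) := by
  have hp0 : 0 < p := by linarith
  refine tendsto_mul_sub_of_abs_le (div_pos (by linarith) (by linarith)) (fun n => sq_nonneg _) hE
    (by simpa using hD0.div_const p) fun n => ?_
  rw [energy_eq_mul_norm_sq_add_nehari ι hp0.ne', sub_add_cancel_left, abs_neg, abs_div,
    abs_of_pos hp0, div_mul_eq_mul_div]
  exact div_le_div_of_nonneg_right (abs_nehari_le_of_hasFDerivAt ι hp0.ne' (hD n)) hp0.le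

end SobolevFunctional

open SobolevFunctional

/-- Abstract version of Lemma 3.3: a Palais–Smale sequence at a level strictly
below the critical threshold `((p-2)/(2p)) C_S^{-p/(p-2)}` converges strongly
to `0`. -/
theorem palais_smale_below_threshold
    {H L : Type*} [NormedAddCommGroup H] [InnerProductSpace ℝ H]
    [NormedAddCommGroup L] [NormedSpace ℝ L]
    (p C_S : ℝ) (hp : 2 < p) (hCS : 0 < C_S)
    (ι : H →L[ℝ] L)
    (hSob : ∀ u : H, ‖ι u‖ ≤ C_S ^ ((1 : ℝ) / 2) * ‖u‖)
    (E : H → ℝ)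
    (hEdef : ∀ u, E u = (1 / 2) * ‖u‖ ^ 2 - (1 / p) * ‖ι u‖ ^ p)
    (E' : H → (H →L[ℝ] ℝ))
    (hE' : ∀ u, HasFDerivAt E (E' u) u)
    (u : ℕ → H) (c : ℝ)
    (hc : c < ((p - 2) / (2 * p)) * C_S ^ (-(p / (p - 2))))
    (hPS1 : Tendsto (fun n => E (u n)) atTop (𝓝 c))
    (hPS2 : Tendsto (fun n => ‖E' (u n)‖) atTop (𝓝 0)) :
    Tendsto u atTop (𝓝 0) := by
  obtain rfl : E = energy ι p := funext hEdef
  have hp0 : p ≠ 0 := by positivity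
  set θ := (p - 2) / (2 * p)
  have hθ : 0 < θ := div_pos (by linarith) (by linarith)
  have hgap := tendsto_mul_norm_sq_sub_energy ι hp (fun n => hE' (u n)) hPS1 hPS2
  have hA : Tendsto (fun n => ‖u n‖ ^ 2) atTop (𝓝 (c / θ)) := by
    have hθA : Tendsto (fun n => θ * ‖u n‖ ^ 2) atTop (𝓝 c) := by
      simpa using hgap.add hPS1
    simpa [hθ.ne'] using hθA.div_const θ
  have hB : Tendsto (fun n => ‖ι (u n)‖ ^ p) atTop (𝓝 (c / θ)) := by
    have hsum := hA.add (hgap.const_mul p)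
    rw [mul_zero, add_zero] at hsum
    refine hsum.congr fun n => ?_
    rw [energy_eq_mul_norm_sq_add_nehari ι hp0, nehari, mul_sub, mul_add, mul_div_cancel₀ _ hp0]
    ring
  have hlim : c / θ ≤ C_S ^ (p / 2) * (c / θ) ^ (p / 2) :=
    le_of_tendsto_of_tendsto' hB ((hA.rpow_const (Or.inr (by positivity))).const_mul _)
      fun n => rpow_le_mul_rpow_sq (norm_nonneg _) (norm_nonneg _) hCS.le (by linarith) (hSob (u n))
  have hzero : c / θ = 0 := by
    refine ((ge_of_tendsto' hA fun n => sq_nonneg _).eq_or_lt.resolve_right ?_).symm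
    intro hpos
    have hthreshold := rpow_neg_le_of_le_mul_rpow hp hCS hpos hlim
    rw [le_div_iff₀ hθ] at hthreshold
    linarith
  rw [hzero] at hA
  rw [tendsto_zero_iff_norm_tendsto_zero]
  simpa [Real.sqrt_sq (norm_nonneg _)] using hA.sqrt
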